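/- Let r be a positive integer and let f be a generalized polynomial with nonnegative real coefficients and exponents in (1/r)ℤ≥0, with f(1) > 0. Let μ := (∑_j j f_j)/f(1) and σ² := (∑_j j² f_j)/f(1) - μ². Then for every real s, the limit as n → ∞ of e^{-s μ √n} · (f(e^{s/√n})/f(1))^n exists and equals e^{s²σ²/2}. -/

import Mathlib

/-- Evaluation of a generalized polynomial `∑ c_j t^j` (a finitely supported
function `ℚ →₀ ℝ`) at a positive real `x`, using real exponentiation. -/
noncomputable def gpEval (f : ℚ →₀ ℝ) (x : ℝ) : ℝ :=
  f.sum fun j c => c * x ^ (j : ℝ)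

/-!
With `φ(u) = f(e^u)`, the cumulant generating function `K(u) = log (φ u / φ 0) - μ u` satisfies
`K 0 = K' 0 = 0` and `K'' 0 = σ²`, so `K t / t² → σ² / 2` by l'Hôpital's rule. The quantity in
the limit is `exp (n K(s / √n))`, and `n K(s / √n) = s² · K(t) / t²` with `t = s / √n → 0`.
-/

open Filter Real Topology

theorem tendsto_div_sqrt_natCast (s : ℝ) : Tendsto (fun n : ℕ => s / √n) atTop (𝓝 0) :=
  tendsto_const_nhds.div_atTop (tendsto_sqrt_atTop.comp tendsto_natCast_atTop_atTop)

theorem tendsto_div_sq_of_hasDerivAt {g g' : ℝ → ℝ} {c : ℝ}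
    (hg : ∀ᶠ t in 𝓝 0, HasDerivAt g (g' t) t) (hg0 : g 0 = 0) (hg'0 : g' 0 = 0)
    (hg' : HasDerivAt g' c 0) :
    Tendsto (fun t => g t / t ^ 2) (𝓝[≠] 0) (𝓝 (c / 2)) := by
  have hslope : Tendsto (fun t => g' t / (2 * t)) (𝓝[≠] 0) (𝓝 (c / 2)) := by
    refine ((hasDerivAt_iff_tendsto_slope.mp hg').div_const 2).congr fun t => ?_
    simp [slope_def_field, hg'0, div_div, mul_comm]
  refine HasDerivAt.lhopital_zero_nhdsNE (hg.filter_mono nhdsWithin_le_nhds)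
    (Eventually.of_forall fun t => by simpa using hasDerivAt_pow 2 t) ?_ ?_ ?_ hslope
  · filter_upwards [self_mem_nhdsWithin] with t ht
    simpa using ht
  · simpa [hg0] using hg.self_of_nhds.continuousAt.tendsto.mono_left nhdsWithin_le_nhds
  · simpa using ((continuous_pow 2).tendsto (0 : ℝ)).mono_left nhdsWithin_le_nhds

theorem tendsto_natCast_mul_comp_div_sqrt {g : ℝ → ℝ} {a : ℝ} (hg0 : g 0 = 0)
    (hg : Tendsto (fun t => g t / t ^ 2) (𝓝[≠] 0) (𝓝 a)) (s : ℝ) :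
    Tendsto (fun n : ℕ => n * g (s / √n)) atTop (𝓝 (s ^ 2 * a)) := by
  rcases eq_or_ne s 0 with rfl | hs
  · simp [hg0]
  have ht : Tendsto (fun n : ℕ => s / √n) atTop (𝓝[≠] 0) := by
    refine tendsto_nhdsWithin_iff.mpr ⟨tendsto_div_sqrt_natCast s, ?_⟩
    filter_upwards [eventually_gt_atTop 0] with n hn
    exact div_ne_zero hs (by positivity)
  refine ((hg.comp ht).const_mul (s ^ 2)).congr' ?_
  filter_upwards [eventually_gt_atTop 0] with n hn
  have hsq : √(n : ℝ) ^ 2 = n := sq_sqrt n.cast_nonneg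
  have hn' : (n : ℝ) ≠ 0 := by positivity
  simp only [Function.comp_apply, div_pow, hsq]
  field_simp

theorem tendsto_exp_mul_pow_div_sqrt {φ φ' : ℝ → ℝ} {c : ℝ}
    (hφ : ∀ᶠ u in 𝓝 0, HasDerivAt φ (φ' u) u) (hφ' : HasDerivAt φ' c 0) (hφ0 : 0 < φ 0)
    (s : ℝ) :
    Tendsto (fun n : ℕ => exp (-s * (φ' 0 / φ 0) * √n) * (φ (s / √n) / φ 0) ^ n) atTop
      (𝓝 (exp (s ^ 2 * (c / φ 0 - (φ' 0 / φ 0) ^ 2) / 2))) := by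
  set m := φ' 0 / φ 0 with hm
  have hpos : ∀ᶠ u in 𝓝 0, 0 < φ u :=
    hφ.self_of_nhds.continuousAt.eventually (lt_mem_nhds hφ0)
  set K := fun u => log (φ u) - log (φ 0) - m * u
  have hK : ∀ᶠ u in 𝓝 0, HasDerivAt K (φ' u / φ u - m) u := by
    filter_upwards [hφ, hpos] with u hu hu0
    exact ((hu.log hu0.ne').sub_const _).fun_sub (by simpa using (hasDerivAt_id u).const_mul m)
  have hK' : HasDerivAt (fun u => φ' u / φ u - m) (c / φ 0 - m ^ 2) 0 := by
    refine ((hφ'.fun_div hφ.self_of_nhds hφ0.ne').sub_const m).congr_deriv ?_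
    rw [hm]
    field_simp
  have hlim := tendsto_natCast_mul_comp_div_sqrt (by simp [K])
    (tendsto_div_sq_of_hasDerivAt hK (by simp [K]) (by simp [m]) hK') s
  rw [mul_div_assoc]
  refine ((continuous_exp.tendsto _).comp hlim).congr' ?_
  filter_upwards [(tendsto_div_sqrt_natCast s).eventually hpos, eventually_gt_atTop 0]
    with n hn hn0
  have hnt : (n : ℝ) * (s / √n) = s * √n := by
    rw [mul_div_assoc', div_eq_iff (by positivity), mul_assoc, mul_self_sqrt n.cast_nonneg,
      mul_comm]
  rw [Function.comp_apply, ← exp_log (div_pos hn hφ0), ← exp_nat_mul, ← exp_add,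
    log_div hn.ne' hφ0.ne']
  congr 1
  simp only [K]
  linear_combination -m * hnt

noncomputable def expMoment (f : ℚ →₀ ℝ) (k : ℕ) (u : ℝ) : ℝ :=
  f.sum fun j c => (j : ℝ) ^ k * c * exp (j * u)

theorem hasDerivAt_expMoment (f : ℚ →₀ ℝ) (k : ℕ) (u : ℝ) :
    HasDerivAt (expMoment f k) (expMoment f (k + 1) u) u := by
  unfold expMoment Finsupp.sum
  refine HasDerivAt.fun_sum fun j _ => ?_
  have hexp := ((hasDerivAt_id' u).const_mul (j : ℝ)).exp
  refine (hexp.const_mul ((j : ℝ) ^ k * f j)).congr_deriv ?_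
  dsimp only
  ring

theorem gpEval_exp_eq_expMoment (f : ℚ →₀ ℝ) (u : ℝ) : gpEval f (exp u) = expMoment f 0 u := by
  simp [gpEval, expMoment, ← exp_mul, mul_comm]

theorem stmt_17_general (f : ℚ →₀ ℝ)
    (h1 : 0 < gpEval f 1)
    (μ σ2 : ℝ)
    (hμ : μ = (f.sum fun j c => (j : ℝ) * c) / gpEval f 1)
    (hσ2 : σ2 = (f.sum fun j c => (j : ℝ) ^ 2 * c) / gpEval f 1 - μ ^ 2)
    (s : ℝ) :
    Filter.Tendsto
      (fun n : ℕ =>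
        Real.exp (-s * μ * Real.sqrt n) *
          (gpEval f (Real.exp (s / Real.sqrt n)) / gpEval f 1) ^ n)
      Filter.atTop (nhds (Real.exp (s ^ 2 * σ2 / 2))) := by
  have hf1 : gpEval f 1 = expMoment f 0 0 := by rw [← exp_zero, gpEval_exp_eq_expMoment]
  have hm1 : (f.sum fun j c => (j : ℝ) * c) = expMoment f 1 0 := by simp [expMoment]
  have hm2 : (f.sum fun j c => (j : ℝ) ^ 2 * c) = expMoment f 2 0 := by simp [expMoment]
  rw [hf1] at h1 hμ hσ2 ⊢
  rw [hm1] at hμ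
  rw [hm2] at hσ2
  subst hμ hσ2
  simpa only [gpEval_exp_eq_expMoment] using tendsto_exp_mul_pow_div_sqrt
    (Eventually.of_forall (hasDerivAt_expMoment f 0)) (hasDerivAt_expMoment f 1 0) h1 s

theorem stmt_17 (r : ℕ) (hr : 0 < r) (f : ℚ →₀ ℝ)
    (hexp : ∀ j ∈ f.support, ∃ i : ℕ, j = (i : ℚ) / r)
    (hpos : ∀ j, 0 ≤ f j)
    (h1 : 0 < gpEval f 1)
    (μ σ2 : ℝ)
    (hμ : μ = (f.sum fun j c => (j : ℝ) * c) / gpEval f 1)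
    (hσ2 : σ2 = (f.sum fun j c => (j : ℝ) ^ 2 * c) / gpEval f 1 - μ ^ 2)
    (s : ℝ) :
    Filter.Tendsto
      (fun n : ℕ =>
        Real.exp (-s * μ * Real.sqrt n) *
          (gpEval f (Real.exp (s / Real.sqrt n)) / gpEval f 1) ^ n)
      Filter.atTop (nhds (Real.exp (s ^ 2 * σ2 / 2))) :=
  stmt_17_general f h1 μ σ2 hμ hσ2 s
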